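/- Let G be a finite group, K a Carter subgroup of G, and Y a subgroup of G containing K such that any two Carter subgroups of Y are conjugate in Y. Then Y is self-normalizing in G, i.e., the normalizer of Y in G equals Y. -/

import Mathlib

/-- A Carter subgroup: a nilpotent self-normalizing subgroup. -/
def IsCarterSubgroup {G : Type*} [Group G] (H : Subgroup G) : Prop :=
  Group.IsNilpotent H ∧ Subgroup.normalizer (H : Set G) = H

/-!
If `g` normalizes `Y`, then `K ^ g` is again a Carter subgroup of `Y`, so by hypothesis
`K ^ g = K ^ y` for some `y ∈ Y` (a Frattini argument). Hence `y⁻¹ g` normalizes `K`, and since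
`K` is self-normalizing, `y⁻¹ g ∈ K ≤ Y`, i.e. `g ∈ Y`.
-/

open Pointwise

namespace Subgroup

variable {G : Type*} [Group G]

theorem inv_mul_mem_normalizer_of_map_conj_eq {K : Subgroup G} {g h : G}
    (hgh : K.map (MulAut.conj g).toMonoidHom = K.map (MulAut.conj h).toMonoidHom) :
    h⁻¹ * g ∈ normalizer (K : Set G) := by
  change MulAut.conj g • K = MulAut.conj h • K at hgh
  rw [mem_normalizer_iff_map_conj_eq]
  change MulAut.conj (h⁻¹ * g) • K = K
  rw [map_mul, mul_smul, hgh, map_inv, inv_smul_smul]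

theorem map_conj_le_of_mem_normalizer {K Y : Subgroup G} {g : G}
    (hg : g ∈ normalizer (Y : Set G)) (hKY : K ≤ Y) :
    K.map (MulAut.conj g).toMonoidHom ≤ Y := by
  rw [mem_normalizer_iff_map_conj_eq] at hg
  exact hg ▸ map_mono hKY

theorem map_subtype_map_conj {Y : Subgroup G} (H : Subgroup Y) (y : Y) :
    (H.map (MulAut.conj y).toMonoidHom).map Y.subtype =
      (H.map Y.subtype).map (MulAut.conj (y : G)).toMonoidHom := by
  rw [map_map, map_map]
  rfl

theorem map_conj_eq_of_subgroupOf_eq {K L Y : Subgroup G} (hKY : K ≤ Y) (hLY : L ≤ Y)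
    {y : Y} (h : L.subgroupOf Y = (K.subgroupOf Y).map (MulAut.conj y).toMonoidHom) :
    L = K.map (MulAut.conj (y : G)).toMonoidHom := by
  have := congrArg (map Y.subtype) h
  rwa [map_subtype_map_conj, map_subgroupOf_eq_of_le hKY, map_subgroupOf_eq_of_le hLY] at this

end Subgroup

namespace IsCarterSubgroup

variable {G G' : Type*} [Group G] [Group G'] {H : Subgroup G}

theorem map_equiv (hH : IsCarterSubgroup H) (e : G ≃* G') :
    IsCarterSubgroup (H.map e.toMonoidHom) :=
  ⟨@Group.nilpotent_of_mulEquiv _ _ _ _ hH.1 (H.equivMapOfInjective _ e.injective),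
    by rw [← Subgroup.map_equiv_normalizer_eq, hH.2]⟩

theorem subgroupOf (hH : IsCarterSubgroup H) {Y : Subgroup G} (hHY : H ≤ Y) :
    IsCarterSubgroup (H.subgroupOf Y) :=
  ⟨@Group.nilpotent_of_mulEquiv _ _ _ _ hH.1 (Subgroup.subgroupOfEquivOfLe hHY).symm,
    by rw [← Subgroup.subgroupOf_normalizer_eq hHY, hH.2]⟩

end IsCarterSubgroup

theorem self_normalizing_of_contains_carter_general {G : Type*} [Group G]
    (K Y : Subgroup G) (hK : IsCarterSubgroup K) (hKY : K ≤ Y)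
    (hconj : ∀ H₁ H₂ : Subgroup Y, IsCarterSubgroup H₁ → IsCarterSubgroup H₂ →
      ∃ y : Y, H₂ = H₁.map (MulAut.conj y).toMonoidHom) :
    Subgroup.normalizer (Y : Set G) = Y := by
  refine le_antisymm (fun g hg => ?_) Subgroup.le_normalizer
  have hKgY := Subgroup.map_conj_le_of_mem_normalizer hg hKY
  obtain ⟨y, hy⟩ := hconj _ _ (hK.subgroupOf hKY) ((hK.map_equiv (MulAut.conj g)).subgroupOf hKgY)
  have hyg : (y : G)⁻¹ * g ∈ K := hK.2 ▸ Subgroup.inv_mul_mem_normalizer_of_map_conj_eq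
    (Subgroup.map_conj_eq_of_subgroupOf_eq hKY hKgY hy)
  simpa using Y.mul_mem y.2 (hKY hyg)

/-- A subgroup `Y` of a finite group `G` containing a Carter subgroup of `G` and in which
Carter subgroups are conjugate is self-normalizing. -/
theorem self_normalizing_of_contains_carter {G : Type*} [Group G] [Finite G]
    (K Y : Subgroup G) (hK : IsCarterSubgroup K) (hKY : K ≤ Y)
    (hconj : ∀ H₁ H₂ : Subgroup Y, IsCarterSubgroup H₁ → IsCarterSubgroup H₂ →
      ∃ y : Y, H₂ = H₁.map (MulAut.conj y).toMonoidHom) :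
    Subgroup.normalizer (Y : Set G) = Y :=
  self_normalizing_of_contains_carter_general K Y hK hKY hconj
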